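/- arXiv:1104.4645 — 6 statements merged into one kernel-verified Lean document; each statement's English description precedes it below -/
import Mathlib

section
/- Let a < 0 be a real number and let P ∈ E_a(ℝ) be a point of infinite order. Then λ_∞(P) > (1/4)·log(x(P)² − a) − (1/12)·log|Δ(E_a)|. -/
open Filter Real

/-- The elliptic curve `y² = x³ + a·x` over a field. -/
def Ecurve {F : Type*} [Field F] (a : F) : WeierstrassCurve.Affine F :=
  { a₁ := 0, a₂ := 0, a₃ := 0, a₄ := a, a₆ := 0 }

/-- The x-coordinate of a point (with junk value `0` at the identity `O`). -/
def xc {F : Type*} [Field F] {W : WeierstrassCurve.Affine F} : W.Point → F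
  | .zero => 0
  | @WeierstrassCurve.Affine.Point.some _ _ _ x _ _ => x

/-- For `E_a : y² = x³ + ax`, the quantity `z(Q) = (1 − a/x(Q)²)²` from Tate's series. -/
noncomputable def zE (a : ℝ) (x : ℝ) : ℝ := (1 - a / x ^ 2) ^ 2

/-- The archimedean local height
`λ_∞(P) = (1/2)log|x(P)| + (1/8)·S − (1/12)·log|Δ(E_a)|` of a point of infinite order,
where `S` is the (hypothesized) sum of Tate's series `∑_{k≥0} 4^{−k}·log z(2^kP)`
and `Δ(E_a) = −64a³`. -/
noncomputable def lamInf (a : ℝ) {W : WeierstrassCurve.Affine ℝ} (P : W.Point) (S : ℝ) : ℝ :=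
  (1 / 2) * Real.log |xc P| + (1 / 8) * S - (1 / 12) * Real.log |(-64) * a ^ 3|

/-!
Since `a < 0`, every `z(Q) = (1 - a/x(Q)²)²` exceeds `1`, so all terms of Tate's series are
positive and its sum exceeds its first term `log z(P)`. That term equals
`2 log(x(P)² - a) - 4 log |x(P)|`, which turns `S > log z(P)` into the claimed bound.
-/

theorem one_lt_zE {a x : ℝ} (ha : a < 0) (hx : x ≠ 0) : 1 < zE a x := by
  have : 1 < 1 - a / x ^ 2 := by
    linarith [div_neg_of_neg_of_pos ha (by positivity : 0 < x ^ 2)]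
  exact one_lt_pow₀ this two_ne_zero

theorem log_zE {a x : ℝ} (hx : x ≠ 0) (hxa : x ^ 2 - a ≠ 0) :
    log (zE a x) = 2 * log (x ^ 2 - a) - 4 * log |x| := by
  have hsplit : 1 - a / x ^ 2 = (x ^ 2 - a) / |x| ^ 2 := by
    rw [sq_abs]
    field_simp
  rw [zE, hsplit, log_pow, log_div hxa (by positivity), log_pow]
  push_cast
  ring

theorem arch_a_neg_part_a_general (a : ℝ) (ha : a < 0)
    (P : (Ecurve a).Point)
    (hx : ∀ k : ℕ, xc ((2 ^ k) • P) ≠ 0)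
    (S : ℝ)
    (hS : HasSum (fun k : ℕ => (1 / 4 : ℝ) ^ k * Real.log (zE a (xc ((2 ^ k) • P)))) S) :
    lamInf a P S
      > (1 / 4) * Real.log ((xc P) ^ 2 - a) - (1 / 12) * Real.log |(-64) * a ^ 3| := by
  have hterm_pos : ∀ k : ℕ, 0 < (1 / 4 : ℝ) ^ k * log (zE a (xc ((2 ^ k) • P))) :=
    fun k => mul_pos (by positivity) (log_pos (one_lt_zE ha (hx k)))
  have hfirst : log (zE a (xc P)) < S := by
    simpa using lt_hasSum hS 0 (fun k _ => (hterm_pos k).le) 1 one_ne_zero (hterm_pos 1)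
  have hxP : xc P ≠ 0 := by simpa using hx 0
  rw [log_zE hxP (sub_pos.2 (ha.trans_le (sq_nonneg _))).ne'] at hfirst
  rw [lamInf]
  linarith

/-- Lemma 3.1(a): for `a < 0` and a point `P ∈ E_a(ℝ)` of infinite order,
`λ_∞(P) > (1/4)·log(x(P)² − a) − (1/12)·log|Δ(E_a)|`. -/
theorem arch_a_neg_part_a (a : ℝ) (ha : a < 0)
    (P : (Ecurve a).Point)
    (hP : ∀ n : ℕ, 0 < n → n • P ≠ 0)
    (hx : ∀ k : ℕ, xc ((2 ^ k) • P) ≠ 0)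
    (S : ℝ)
    (hS : HasSum (fun k : ℕ => (1 / 4 : ℝ) ^ k * Real.log (zE a (xc ((2 ^ k) • P)))) S) :
    lamInf a P S
      > (1 / 4) * Real.log ((xc P) ^ 2 - a) - (1 / 12) * Real.log |(-64) * a ^ 3| :=
  arch_a_neg_part_a_general a ha P hx S hS
end

section
/- Let a ≤ −2 be a real number and let P ∈ E_a(ℝ) be a point of infinite order not lying in the identity component E_a⁰(ℝ) (so −√(−a) < x(P) < 0). Then −(1/4)·log|a| − 0.16 < ( (1/2)·log max{1, |x(P)|} − (1/12)·log|Δ(E_a)| ) − λ_∞(P). -/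
/-!
Every point `2Q ≠ O` lies in the identity component, because with `s = √(−a)` one has
`x(2Q) − s = (x² − 2sx + a)² / (4y²)`. There `1 ≤ z ≤ 4`, so the tail `k ≥ 1` of Tate's series
is at most `(1/3)·log 4`, and the height is controlled by its first term
`log z(P) = 2·log(x² − a) − 4·log|x|`. For `a ≤ −2` we have `x² − a ≤ (3/2)·max{1,|x|}²·|a|`,
which leaves the constant `(1/4)·log(3/2) + (1/12)·log 2 < 0.16`.
-/

open Filter Real

open WeierstrassCurve.Affine

lemma le_slope_sq_sub_two_mul {a x y s : ℝ} (hy : y ≠ 0) (hE : y ^ 2 = x ^ 3 + a * x)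
    (hs : s ^ 2 = -a) : s ≤ ((3 * x ^ 2 + a) / (2 * y)) ^ 2 - 2 * x := by
  have key : ((3 * x ^ 2 + a) / (2 * y)) ^ 2 - 2 * x - s =
      (x ^ 2 - 2 * s * x + a) ^ 2 / (2 * y) ^ 2 := by
    field_simp
    linear_combination (-4 * (2 * x + s)) * hE - 4 * x ^ 2 * hs
  have : 0 ≤ (x ^ 2 - 2 * s * x + a) ^ 2 / (2 * y) ^ 2 := by positivity
  linarith

theorem sqrt_neg_le_xc_two_smul {a : ℝ} (ha : a ≤ 0) {Q : (Ecurve a).Point} (hQ : 2 • Q ≠ 0) :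
    √(-a) ≤ xc (2 • Q) := by
  rw [two_smul] at hQ ⊢
  rcases Q with _ | ⟨x, y, h⟩
  · exact absurd rfl hQ
  by_cases hy : y = (Ecurve a).negY x y
  · exact absurd (Point.add_self_of_Y_eq hy) hQ
  have hy0 : y ≠ 0 := by
    rintro rfl
    exact hy (by simp [Ecurve, negY])
  have hE : y ^ 2 = x ^ 3 + a * x := by
    simpa [Ecurve] using (equation_iff ..).mp h.1
  rw [Point.add_self_of_Y_ne hy]
  simp only [xc, slope_of_Y_ne rfl hy]
  simp only [Ecurve, addX, negY]
  convert le_slope_sq_sub_two_mul hy0 hE (Real.sq_sqrt (neg_nonneg.mpr ha)) using 1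
  ring

lemma log_zE_le_two_mul_log_two {a t : ℝ} (ha : a ≤ 0) (ht : -a ≤ t ^ 2) :
    log (zE a t) ≤ 2 * log 2 := by
  have h0 : 0 ≤ -a / t ^ 2 := div_nonneg (neg_nonneg.mpr ha) (sq_nonneg t)
  have h1 : -a / t ^ 2 ≤ 1 := div_le_one_of_le₀ ht (sq_nonneg t)
  rw [zE, log_pow]
  push_cast
  gcongr <;> linarith [neg_div (t ^ 2) a]

lemma log_zE_xc_two_smul_le {a : ℝ} (ha : a ≤ 0) {Q : (Ecurve a).Point} (hQ : 2 • Q ≠ 0) :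
    log (zE a (xc (2 • Q))) ≤ 2 * log 2 :=
  log_zE_le_two_mul_log_two ha (Real.sqrt_le_iff.mp (sqrt_neg_le_xc_two_smul ha hQ)).2

lemma log_zE_eq {a x : ℝ} (ha : a ≤ 0) (hx : x ≠ 0) :
    log (zE a x) = 2 * log (x ^ 2 - a) - 4 * log |x| := by
  have hx2 : 0 < x ^ 2 := by positivity
  rw [zE, one_sub_div hx2.ne', log_pow, log_div (by linarith) hx2.ne', ← sq_abs, log_pow]
  push_cast
  ring

lemma sq_sub_le_mul_max_one_sq {a x : ℝ} (ha : a ≤ -2) :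
    x ^ 2 - a ≤ 3 / 2 * max 1 |x| ^ 2 * -a := by
  have hm : 1 ≤ max 1 |x| ^ 2 := one_le_pow₀ (le_max_left _ _)
  have hx : x ^ 2 ≤ max 1 |x| ^ 2 := by
    rw [← sq_abs]
    gcongr
    exact le_max_right _ _
  nlinarith

theorem HasSum.le_head_add_geometric {f : ℕ → ℝ} {S r c : ℝ} (hS : HasSum f S) (hr₀ : 0 ≤ r)
    (hr₁ : r < 1) (hf : ∀ k, f (k + 1) ≤ r ^ (k + 1) * c) : S ≤ f 0 + r / (1 - r) * c := by
  have htail : HasSum (fun k => f (k + 1)) (S - f 0) := by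
    simpa using (hasSum_nat_add_iff' 1).mpr hS
  have hgeom : HasSum (fun k : ℕ => r ^ (k + 1) * c) (r / (1 - r) * c) := by
    simpa [pow_succ', div_eq_mul_inv] using
      ((hasSum_geometric_of_lt_one hr₀ hr₁).mul_left r).mul_right c
  linarith [hasSum_le hf htail hgeom]

theorem arch_a_neg_part_d_general (a : ℝ) (ha : a ≤ -2)
    (P : (Ecurve a).Point)
    (hx : ∀ k : ℕ, xc ((2 ^ k) • P) ≠ 0)
    (S : ℝ)
    (hS : HasSum (fun k : ℕ => (1 / 4 : ℝ) ^ k * Real.log (zE a (xc ((2 ^ k) • P)))) S) :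
    -(1 / 4) * Real.log |a| - 0.16
        < ((1 / 2) * Real.log (max 1 |xc P|) - (1 / 12) * Real.log |(-64) * a ^ 3|)
            - lamInf a P S := by
  have ha0 : a ≤ 0 := by linarith
  have hS_le : S ≤ log (zE a (xc P)) + 2 / 3 * log 2 := by
    have := hS.le_head_add_geometric (r := 1 / 4) (c := 2 * log 2) (by norm_num) (by norm_num)
      fun k => by
        have hxk := hx (k + 1)
        rw [pow_succ' (2 : ℕ), mul_smul] at hxk ⊢
        have hne : 2 • (2 ^ k) • P ≠ 0 := fun h => hxk (by rw [h]; rfl)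
        exact mul_le_mul_of_nonneg_left (log_zE_xc_two_smul_le ha0 hne) (by positivity)
    norm_num at this ⊢
    linarith
  have hlog : log (xc P ^ 2 - a) ≤ log 3 - log 2 + 2 * log (max 1 |xc P|) + log (-a) := by
    have hm : 0 < max 1 |xc P| := lt_max_of_lt_left one_pos
    calc log (xc P ^ 2 - a) ≤ log (3 / 2 * max 1 |xc P| ^ 2 * -a) :=
          log_le_log (by nlinarith [sq_nonneg (xc P)]) (sq_sub_le_mul_max_one_sq ha)
      _ = _ := by
        rw [log_mul (by positivity) (by linarith), log_mul (by norm_num) (by positivity),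
          log_div three_ne_zero two_ne_zero, log_pow]
        push_cast
        ring
  rw [log_zE_eq ha0 (by simpa using hx 0)] at hS_le
  rw [lamInf, abs_of_nonpos ha0]
  linarith [log_two_gt_d9, log_three_lt_d9]

/-- Lemma 3.1(d): for `a ≤ −2` and a point `P ∈ E_a(ℝ)` of infinite order outside the
identity component (so `−√(−a) < x(P) < 0`),
`−(1/4)·log|a| − 0.16 < ((1/2)·log max{1,|x(P)|} − (1/12)·log|Δ(E_a)|) − λ_∞(P)`. -/
theorem arch_a_neg_part_d (a : ℝ) (ha : a ≤ -2)
    (P : (Ecurve a).Point)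
    (hP : ∀ n : ℕ, 0 < n → n • P ≠ 0)
    (hx : ∀ k : ℕ, xc ((2 ^ k) • P) ≠ 0)
    (hP1 : -Real.sqrt (-a) < xc P) (hP2 : xc P < 0)
    (S : ℝ)
    (hS : HasSum (fun k : ℕ => (1 / 4 : ℝ) ^ k * Real.log (zE a (xc ((2 ^ k) • P)))) S) :
    -(1 / 4) * Real.log |a| - 0.16
        < ((1 / 2) * Real.log (max 1 |xc P|) - (1 / 12) * Real.log |(-64) * a ^ 3|)
            - lamInf a P S :=
  arch_a_neg_part_d_general a ha P hx S hS
end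

section
/- Let a > 0 and c > 1 be real numbers, put x' = c·√a and z = 1 − 8a·x'^{−2} + 16·a^{3/2}·x'^{−3} − 8a²·x'^{−4}. Then (1/8)·log( x'⁴·z / ((c−1)·√a)⁴ ) > 1/(2c) − 3/(4c²). (Equivalently: for every real c > 1, (1/8)·log( (c⁴ − 8c² + 16c − 8)/(c−1)⁴ ) > 1/(2c) − 3/(4c²).) -/
open Real

/-!
After scaling out `√a` (so `a^{3/2} = √a³`), the argument of the logarithm is the quartic ratio
`N / D` with `N = c⁴ - 8c² + 16c - 8` and `D = (c - 1)⁴`, independent of `a`. The Padé bound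
`log x > 2(x - 1)/(x + 1)` for `x = N / D > 1` reduces the claim to the polynomial inequality
`(2c - 3)(N + D) ≤ c²(N - D)`, whose difference is `12t³ - 3t² + 8t + 2 > 0` at `t = c - 1`.
-/

theorem two_mul_sub_one_div_add_one_lt_log {x : ℝ} (hx : 1 < x) :
    2 * (x - 1) / (x + 1) < log x := by
  set y := (x - 1) / (x + 1) with hy
  have hy0 : 0 < y := div_pos (by linarith) (by linarith)
  have hy1 : y < 1 := (div_lt_one (by linarith)).2 (by linarith)
  have hlog : log (1 + y) - log (1 - y) = log x := by
    rw [← log_div (by linarith) (by linarith), hy]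
    congr 1
    field_simp
    ring
  -- `2y` is the first term of the artanh series of `log x`, whose other terms are positive
  have hsum := hasSum_log_sub_log_of_abs_lt_one (abs_lt.2 ⟨by linarith, hy1⟩)
  rw [hlog] at hsum
  have := lt_hasSum hsum 0 (fun k _ => by positivity) 1 one_ne_zero (by positivity)
  simpa [mul_div_assoc] using this

theorem x4z_ratio_eq {a c : ℝ} (ha : 0 < a) (hc₀ : c ≠ 0) (hc₁ : c ≠ 1) :
    (c * √a) ^ 4 *
        (1 - 8 * a / (c * √a) ^ 2 + 16 * a ^ ((3 : ℝ) / 2) / (c * √a) ^ 3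
          - 8 * a ^ 2 / (c * √a) ^ 4) / ((c - 1) * √a) ^ 4 =
      (c ^ 4 - 8 * c ^ 2 + 16 * c - 8) / (c - 1) ^ 4 := by
  obtain ⟨s, hs, rfl⟩ : ∃ s, 0 < s ∧ a = s ^ 2 := ⟨√a, sqrt_pos.2 ha, (sq_sqrt ha.le).symm⟩
  have hc₁' : c - 1 ≠ 0 := sub_ne_zero.2 hc₁
  rw [rpow_div_two_eq_sqrt _ (by positivity), sqrt_sq hs.le, show (3 : ℝ) = (3 : ℕ) by norm_num,
    rpow_natCast]
  field_simp

theorem x4z_log_ratio_lower_bound {c : ℝ} (hc : 1 < c) :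
    1 / (2 * c) - 3 / (4 * c ^ 2) <
      1 / 8 * log ((c ^ 4 - 8 * c ^ 2 + 16 * c - 8) / (c - 1) ^ 4) := by
  have hc₁ := sub_pos.2 hc
  set N := c ^ 4 - 8 * c ^ 2 + 16 * c - 8
  set D := (c - 1) ^ 4
  have hD : 0 < D := by positivity
  have hND : D < N := by nlinarith [pow_pos hc₁ 3]
  calc 1 / (2 * c) - 3 / (4 * c ^ 2) = (2 * c - 3) / (4 * c ^ 2) := by field_simp; ring
    _ ≤ (N - D) / (4 * (N + D)) := by
        rw [div_le_div_iff₀ (by positivity) (by linarith)]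
        nlinarith [pow_pos hc₁ 3]
    _ = 1 / 8 * (2 * (N / D - 1) / (N / D + 1)) := by field_simp; ring
    _ < 1 / 8 * log (N / D) := by
        gcongr
        exact two_mul_sub_one_div_add_one_lt_log ((one_lt_div hD).2 hND)

/-- Lemma 3.3(a): for real `a > 0` and `c > 1`, with `x' = c·√a` and
`z = 1 − 8a·x'⁻² + 16·a^{3/2}·x'⁻³ − 8a²·x'⁻⁴`, one has
`(1/8)·log(x'⁴·z / ((c−1)·√a)⁴) > 1/(2c) − 3/(4c²)`. -/
theorem x4z_lower_bound_c (a c : ℝ) (ha : 0 < a) (hc : 1 < c) :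
    (1 / 8) * Real.log
        ((c * Real.sqrt a) ^ 4 *
            (1 - 8 * a / (c * Real.sqrt a) ^ 2 + 16 * a ^ ((3 : ℝ) / 2) / (c * Real.sqrt a) ^ 3
              - 8 * a ^ 2 / (c * Real.sqrt a) ^ 4) /
          ((c - 1) * Real.sqrt a) ^ 4)
      > 1 / (2 * c) - 3 / (4 * c ^ 2) := by
  rw [x4z_ratio_eq ha (by linarith) hc.ne']
  exact x4z_log_ratio_lower_bound hc
end

section
/- Let a be a nonzero fourth-power-free integer and let P ∈ E_a(ℚ) be a point of infinite order. Write x(P) = u·v² with u a squarefree integer and v ∈ ℚ. Then for every positive integer n: if n is even, x(nP) is the square of a rational number, and if n is odd, x(nP) = u·w² for some w ∈ ℚ. -/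
open Filter Real

/-!
On `y² = x³ + A x` the x-coordinates of `P`, `Q` and `P + Q` multiply to a square: if the chord
through `(x₁, y₁)`, `(x₂, y₂)` meets the curve again at abscissa `x₃`, then
`x₁ x₂ x₃ = ((y₁ x₂ - y₂ x₁) / (x₁ - x₂))²`, and for the tangent at `(x, y)`,
`x² x₃ = (x (x² - A) / 2y)²`. Hence `x(nP) ≡ x(P)ⁿ` modulo squares as long as no `x(kP)`
vanishes, and `x(kP) = 0` only at the 2-torsion point `(0, 0)`, which a point of infinite order
never reaches.
-/

open WeierstrassCurve.Affine

@[simp]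
lemma xc_zero {F : Type*} [Field F] {W : WeierstrassCurve.Affine F} : xc (0 : W.Point) = 0 :=
  rfl

@[simp]
lemma xc_some {F : Type*} [Field F] {W : WeierstrassCurve.Affine F} {x y : F}
    (h : W.Nonsingular x y) : xc (Point.some x y h) = x :=
  rfl

namespace Ecurve

variable {F : Type*} [Field F] {A : F}

lemma sq_eq_of_nonsingular {x y : F} (h : (Ecurve A).Nonsingular x y) :
    y ^ 2 = x ^ 3 + A * x := by
  simpa [Ecurve] using ((Ecurve A).equation_iff x y).mp h.1

lemma negY_eq (x y : F) : (Ecurve A).negY x y = -y := by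
  simp [Ecurve, negY]

variable [DecidableEq F]

lemma xc_ne_zero_of_two_nsmul_ne_zero {P : (Ecurve A).Point} (hP : 2 • P ≠ 0) : xc P ≠ 0 := by
  rw [two_nsmul] at hP
  cases P with
  | zero => exact absurd rfl hP
  | some x y h =>
    rintro (rfl : x = 0)
    have hy : y = 0 := by simpa using sq_eq_of_nonsingular h
    exact hP (Point.add_self_of_Y_eq (h₁ := h) (by rw [negY_eq, hy, neg_zero]))

lemma xc_add_mul_of_X_ne {x₁ y₁ x₂ y₂ : F} (h₁ : (Ecurve A).Nonsingular x₁ y₁)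
    (h₂ : (Ecurve A).Nonsingular x₂ y₂) (hx : x₁ ≠ x₂) :
    xc (Point.some _ _ h₁ + Point.some _ _ h₂) * (x₁ * x₂) =
      ((y₁ * x₂ - y₂ * x₁) / (x₁ - x₂)) ^ 2 := by
  have hx' : x₁ - x₂ ≠ 0 := sub_ne_zero.mpr hx
  rw [Point.add_of_X_ne hx, xc_some, addX, slope_of_X_ne hx]
  simp only [Ecurve]
  field_simp
  linear_combination (x₁ * x₂ - x₂ ^ 2) * sq_eq_of_nonsingular h₁ +
    (x₁ * x₂ - x₁ ^ 2) * sq_eq_of_nonsingular h₂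

lemma xc_add_self_mul_of_Y_ne {x y : F} (h : (Ecurve A).Nonsingular x y)
    (hy : y ≠ (Ecurve A).negY x y) :
    xc (Point.some _ _ h + Point.some _ _ h) * (x * x) = (x * (x ^ 2 - A) / (2 * y)) ^ 2 := by
  have hy' : 2 * y ≠ 0 := by rw [negY_eq] at hy; contrapose! hy; linear_combination hy
  obtain ⟨h2, hy0⟩ := mul_ne_zero_iff.mp hy'
  rw [Point.add_self_of_Y_ne hy, xc_some, addX, slope_of_Y_ne rfl hy, negY_eq]
  simp only [Ecurve]
  rw [sub_neg_eq_add, ← two_mul]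
  field_simp
  linear_combination (-8 * x ^ 3) * sq_eq_of_nonsingular h

theorem isSquare_xc_add_mul (P Q : (Ecurve A).Point) : IsSquare (xc (P + Q) * (xc P * xc Q)) := by
  rcases P with _ | ⟨x₁, y₁, h₁⟩
  · exact ⟨0, by simp [← Point.zero_def]⟩
  rcases Q with _ | ⟨x₂, y₂, h₂⟩
  · exact ⟨0, by simp [← Point.zero_def]⟩
  rw [xc_some, xc_some]
  by_cases hx : x₁ = x₂
  · subst hx
    obtain rfl | rfl : y₂ = y₁ ∨ y₂ = -y₁ :=
      sq_eq_sq_iff_eq_or_eq_neg.mp (by rw [sq_eq_of_nonsingular h₁, sq_eq_of_nonsingular h₂])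
    · by_cases hy : y₂ = (Ecurve A).negY x₁ y₂
      · exact ⟨0, by simp [Point.add_self_of_Y_eq hy]⟩
      · exact (xc_add_self_mul_of_Y_ne h₂ hy).symm ▸ IsSquare.sq _
    · exact ⟨0, by simp [Point.add_of_Y_eq (h₁ := h₁) (h₂ := h₂) rfl (by rw [negY_eq, neg_neg])]⟩
  · exact (xc_add_mul_of_X_ne h₁ h₂ hx).symm ▸ IsSquare.sq _

theorem isSquare_xc_nsmul_mul_pow {P : (Ecurve A).Point} (hP : ∀ k, 0 < k → xc (k • P) ≠ 0)
    {n : ℕ} (hn : 0 < n) : IsSquare (xc (n • P) * xc P ^ n) := by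
  induction n, hn using Nat.le_induction with
  | base => exact ⟨xc P, by simp⟩
  | succ n hn ih =>
    have hsum := isSquare_xc_add_mul (n • P) P
    rw [← succ_nsmul] at hsum
    have hxn := hP n hn
    have hsplit : xc ((n + 1) • P) * xc P ^ (n + 1) =
        xc ((n + 1) • P) * (xc (n • P) * xc P) * (xc (n • P) * xc P ^ n) / xc (n • P) ^ 2 := by
      field_simp
      ring
    rw [hsplit]
    exact (hsum.mul ih).div (IsSquare.sq _)

end Ecurve

theorem x_nP_square_classes_general (a : ℤ)
    (P : (Ecurve (a : ℚ)).Point)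
    (hP : ∀ n : ℕ, 0 < n → n • P ≠ 0)
    (u : ℤ) (v : ℚ) (hx : xc P = (u : ℚ) * v ^ 2) :
    ∀ n : ℕ, 0 < n →
      (Even n → ∃ w : ℚ, xc (n • P) = w ^ 2) ∧
      (Odd n → ∃ w : ℚ, xc (n • P) = (u : ℚ) * w ^ 2) := by
  intro n hn
  have hxc : ∀ k, 0 < k → xc (k • P) ≠ 0 := fun k hk ↦
    Ecurve.xc_ne_zero_of_two_nsmul_ne_zero (by rw [← mul_nsmul']; exact hP _ (by positivity))
  obtain ⟨s, hs⟩ := Ecurve.isSquare_xc_nsmul_mul_pow hxc hn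
  have hx0 : (u : ℚ) * v ^ 2 ≠ 0 := hx ▸ by simpa using hxc 1 one_pos
  have hu0 : (u : ℚ) ≠ 0 := left_ne_zero_of_mul hx0
  have hv0 : v ≠ 0 := pow_ne_zero_iff two_ne_zero |>.mp (right_ne_zero_of_mul hx0)
  rw [hx] at hs
  constructor
  · rintro ⟨k, rfl⟩
    exact ⟨s / (u ^ k * v ^ (2 * k)), by field_simp; linear_combination hs⟩
  · rintro ⟨k, rfl⟩
    exact ⟨s / (u ^ (k + 1) * v ^ (2 * k + 1)), by field_simp; linear_combination (u : ℚ) * hs⟩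

/-- Lemma 6.1(a): let `a` be a nonzero fourth-power-free integer, `P ∈ E_a(ℚ)` a point of
infinite order, and write `x(P) = u·v²` with `u` a squarefree integer and `v ∈ ℚ`. Then
for every `n ≥ 1`: if `n` is even then `x(nP)` is a rational square, and if `n` is odd
then `x(nP) = u·w²` for some `w ∈ ℚ`. -/
theorem x_nP_square_classes (a : ℤ) (ha : a ≠ 0)
    (hfree : ∀ p : ℕ, p.Prime → ¬ ((p : ℤ) ^ 4 ∣ a))
    (P : (Ecurve (a : ℚ)).Point)
    (hP : ∀ n : ℕ, 0 < n → n • P ≠ 0)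
    (u : ℤ) (hu : Squarefree u) (v : ℚ) (hx : xc P = (u : ℚ) * v ^ 2) :
    ∀ n : ℕ, 0 < n →
      (Even n → ∃ w : ℚ, xc (n • P) = w ^ 2) ∧
      (Odd n → ∃ w : ℚ, xc (n • P) = (u : ℚ) * w ^ 2) :=
  x_nP_square_classes_general a P hP u v hx
end

section
/- Let a be a nonzero fourth-power-free integer and let P ∈ E_a(ℚ) be a point of infinite order. Write x(2P) = A₂/B₂ in lowest terms with A₂ ∈ ℤ and B₂ a positive integer. Then ord₂(B₂) ≥ 4 if a ≡ 1, 5, 7, 9, 13 or 15 (mod 16); ord₂(B₂) ≥ 2 if a ≡ 2, 3, 6, 8, 10, 11, 12 or 14 (mod 16); and ord₂(B₂) ≥ 0 if a ≡ 4 (mod 16). -/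
/-!
Write `ν` for `ord₂` and `P = (x, y)`. The duplication formula gives `x(2P) = ((x² - a) / 2y)²`,
so it suffices to show `ν (x² - a) < ν y` resp. `≤ ν y`, knowing `2 ν y = ν x + ν (x² + a)` from
`y² = x (x² + a)`. Since `ν 0 = 0`, the bounds are stated together with `x² ≠ a`.

If `2 ν x ≠ ν a`, both `x² ± a` have valuation `min (2 ν x) (ν a)`, and the parity of `2 ν y`
finishes the argument. On the diagonal `2 ν x = ν a` only `a` odd with `ν x = 0`, and
`a ≡ 12 (mod 16)` with `ν x = 1`, remain. There `x` resp. `x / 2` is a `2`-adic unit `t`, and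
`t² ≡ 1 (mod 8)` determines `ν (t² + c)` from the residue of `1 + c` modulo `8`; for `a ≡ 1, 5
(mod 8)` this makes `ν (x² + a) = 1` odd, so that case cannot occur.
-/
local notation "ν" => padicValRat 2

lemma le_padicValNat_den {p : ℕ} [Fact p.Prime] {q : ℚ} {k : ℕ} (h : padicValRat p q ≤ -k) :
    k ≤ padicValNat p q.den := by
  rw [padicValRat_def] at h
  omega

lemma add_ne_zero_and_padicValRat_add_eq_of_lt {p : ℕ} [Fact p.Prime] {q r : ℚ} (hq : q ≠ 0)
    (h : padicValRat p q < padicValRat p r) :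
    q + r ≠ 0 ∧ padicValRat p (q + r) = padicValRat p q := by
  rcases eq_or_ne r 0 with rfl | hr
  · simpa using hq
  have hqr : q + r ≠ 0 := fun h0 => by
    rw [eq_neg_of_add_eq_zero_right h0, padicValRat.neg] at h
    exact h.false
  exact ⟨hqr, padicValRat.add_eq_of_lt hqr hq hr h⟩

lemma padicValRat_two : ν 2 = 1 := by
  simpa using padicValRat.self (p := 2) one_lt_two

lemma padicValRat_four : ν 4 = 2 := by
  rw [show (4 : ℚ) = 2 ^ 2 by norm_num, padicValRat.pow, padicValRat_two]
  norm_num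

lemma padicValRat_sq_div_two_mul {z y : ℚ} (hz : z ≠ 0) (hy : y ≠ 0) :
    ν ((z / (2 * y)) ^ 2) = 2 * (ν z - ν y - 1) := by
  rw [padicValRat.pow, padicValRat.div hz (mul_ne_zero two_ne_zero hy),
    padicValRat.mul two_ne_zero hy, padicValRat_two]
  push_cast
  ring

lemma padicValRat_intCast_eq_of_emod {n : ℤ} {k : ℕ} (h : n % 2 ^ (k + 1) = 2 ^ k) :
    ν n = k := by
  obtain ⟨m, hm⟩ : ∃ m, n = 2 ^ k * (2 * m + 1) :=
    ⟨n / 2 ^ (k + 1), by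
      have := Int.emod_add_mul_ediv n (2 ^ (k + 1))
      rw [h] at this
      linear_combination -this⟩
  have hodd : ν ((2 * m + 1 : ℤ) : ℚ) = 0 := by
    rw [padicValRat.of_int, padicValInt.eq_zero_of_not_dvd (by omega), Nat.cast_zero]
  have hm0 : ((2 * m + 1 : ℤ) : ℚ) ≠ 0 := by exact_mod_cast (by omega : 2 * m + 1 ≠ 0)
  rw [hm, Int.cast_mul, padicValRat.mul (by positivity) hm0, hodd, Int.cast_pow, Int.cast_ofNat,
    padicValRat.pow, padicValRat_two]
  ring

lemma le_padicValRat_intCast_of_dvd {n : ℤ} {k : ℕ} (hn : n ≠ 0) (h : 2 ^ k ∣ n) : k ≤ ν n := by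
  rw [padicValRat.of_int]
  exact_mod_cast ((padicValInt_dvd_iff k n).mp (by exact_mod_cast h)).resolve_left hn

lemma exists_odd_div_odd_of_padicValRat_eq_zero {t : ℚ} (ht0 : t ≠ 0) (ht : ν t = 0) :
    ∃ n d : ℤ, Odd n ∧ Odd d ∧ t = n / d := by
  have hv : padicValInt 2 t.num = padicValNat 2 t.den := by rw [padicValRat_def] at ht; omega
  have hden : padicValNat 2 t.den = 0 := by
    by_contra h
    have h2den : 2 ∣ t.den := dvd_of_one_le_padicValNat (by omega)
    have h2num : 2 ∣ t.num.natAbs := dvd_of_one_le_padicValNat (by unfold padicValInt at hv; omega)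
    exact Nat.not_coprime_of_dvd_of_dvd one_lt_two h2num h2den t.reduced
  rw [hden, padicValInt.eq_zero_iff] at hv
  rw [padicValNat.eq_zero_iff] at hden
  refine ⟨t.num, t.den, ?_, ?_, (Rat.num_div_den t).symm⟩
  · simpa [Int.odd_iff, Rat.num_ne_zero, ht0] using hv
  · simpa [Nat.odd_iff] using hden

lemma three_le_padicValRat_sq_sub_one {t : ℚ} (ht0 : t ≠ 0) (ht : ν t = 0) (h1 : t ^ 2 ≠ 1) :
    3 ≤ ν (t ^ 2 - 1) := by
  obtain ⟨n, d, hn, hd, rfl⟩ := exists_odd_div_odd_of_padicValRat_eq_zero ht0 ht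
  have hd2 := Int.odd_iff.mp hd
  have hd0 : (d : ℚ) ≠ 0 := by exact_mod_cast (by omega : d ≠ 0)
  have hnd : n ^ 2 - d ^ 2 ≠ 0 := fun h => h1 <| by
    rw [div_pow, div_eq_one_iff_eq (pow_ne_zero 2 hd0)]
    exact_mod_cast sub_eq_zero.mp h
  have hvd : ν d = 0 := padicValRat_intCast_eq_of_emod (k := 0) (by omega)
  have h8 : 2 ^ 3 ∣ n ^ 2 - d ^ 2 := by
    simpa using dvd_sub (Int.eight_dvd_sq_sub_one_of_odd hn) (Int.eight_dvd_sq_sub_one_of_odd hd)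
  have hsq : ((n : ℚ) / d) ^ 2 - 1 = ((n ^ 2 - d ^ 2 : ℤ) : ℚ) / (d : ℚ) ^ 2 := by
    push_cast
    field_simp
  rw [hsq, padicValRat.div (by exact_mod_cast hnd) (pow_ne_zero 2 hd0), padicValRat.pow, hvd]
  simpa using le_padicValRat_intCast_of_dvd hnd h8

lemma sq_add_intCast_ne_zero_and_padicValRat_eq {t : ℚ} (ht0 : t ≠ 0) (ht : ν t = 0) {c : ℤ}
    {k : ℕ} (hk : k < 3) (hc : (1 + c) % 2 ^ (k + 1) = 2 ^ k) :
    t ^ 2 + c ≠ 0 ∧ ν (t ^ 2 + c) = k := by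
  have hc0 : ((1 + c : ℤ) : ℚ) ≠ 0 := by
    norm_cast
    rintro h
    rw [h, Int.zero_emod] at hc
    exact pow_ne_zero k two_ne_zero hc.symm
  rw [show t ^ 2 + c = ((1 + c : ℤ) : ℚ) + (t ^ 2 - 1) by push_cast; ring,
    ← padicValRat_intCast_eq_of_emod hc]
  rcases eq_or_ne (t ^ 2) 1 with h1 | h1
  · simpa [h1] using hc0
  · refine add_ne_zero_and_padicValRat_add_eq_of_lt hc0 ?_
    have := three_le_padicValRat_sq_sub_one ht0 ht h1
    rw [padicValRat_intCast_eq_of_emod hc]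
    omega

lemma le_padicValRat_sq_add_intCast {t : ℚ} (ht0 : t ≠ 0) (ht : ν t = 0) {c : ℤ} {k : ℕ}
    (hk : k ≤ 3) (hc : 2 ^ k ∣ 1 + c) (hne : t ^ 2 + c ≠ 0) : k ≤ ν (t ^ 2 + c) := by
  rw [show t ^ 2 + c = ((1 + c : ℤ) : ℚ) + (t ^ 2 - 1) by push_cast; ring] at hne ⊢
  rcases eq_or_ne (t ^ 2) 1 with h1 | h1
  · simp only [h1, sub_self, add_zero] at hne ⊢
    exact le_padicValRat_intCast_of_dvd (by exact_mod_cast hne) hc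
  have h3 := three_le_padicValRat_sq_sub_one ht0 ht h1
  rcases eq_or_ne (1 + c) 0 with h0 | h0
  · simp only [h0, Int.cast_zero, zero_add]
    omega
  · have := le_padicValRat_intCast_of_dvd h0 hc
    have := padicValRat.min_le_padicValRat_add (p := 2) hne
    omega

lemma sq_add_ne_zero_and_padicValRat_eq_min {x c : ℚ} (hx : x ≠ 0) (hc : c ≠ 0)
    (hne : 2 * ν x ≠ ν c) : x ^ 2 + c ≠ 0 ∧ ν (x ^ 2 + c) = min (2 * ν x) (ν c) := by
  have hx2 : ν (x ^ 2) = 2 * ν x := by rw [padicValRat.pow]; push_cast; ring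
  rcases lt_or_gt_of_ne hne with h | h
  · rw [min_eq_left h.le, ← hx2]
    exact add_ne_zero_and_padicValRat_add_eq_of_lt (pow_ne_zero 2 hx) (hx2 ▸ h)
  · rw [min_eq_right h.le, add_comm]
    exact add_ne_zero_and_padicValRat_add_eq_of_lt hc (hx2 ▸ h)

section PointValuations

variable {a : ℤ} {x y : ℚ}

lemma ne_zero_of_sq_eq (hxy : y ^ 2 = x * (x ^ 2 + a)) (hy : y ≠ 0) : x ≠ 0 ∧ x ^ 2 + a ≠ 0 :=
  mul_ne_zero_iff.mp (hxy ▸ pow_ne_zero 2 hy)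

lemma two_mul_padicValRat_eq_add (hxy : y ^ 2 = x * (x ^ 2 + a)) (hy : y ≠ 0) :
    2 * ν y = ν x + ν (x ^ 2 + a) := by
  obtain ⟨hx, hxa⟩ := ne_zero_of_sq_eq hxy hy
  rw [← padicValRat.mul hx hxa, ← hxy, padicValRat.pow]
  push_cast
  ring

lemma sq_sub_ne_zero_and_padicValRat_eq_min (hxy : y ^ 2 = x * (x ^ 2 + a)) (hy : y ≠ 0)
    (ha : a ≠ 0) (hne : 2 * ν x ≠ ν a) :
    x ^ 2 - a ≠ 0 ∧ ν (x ^ 2 - a) = min (2 * ν x) (ν a) ∧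
      2 * ν y = ν x + min (2 * ν x) (ν a) := by
  obtain ⟨hx, -⟩ := ne_zero_of_sq_eq hxy hy
  have haq : (a : ℚ) ≠ 0 := by exact_mod_cast ha
  obtain ⟨-, hplus⟩ := sq_add_ne_zero_and_padicValRat_eq_min hx haq hne
  obtain ⟨hz, hminus⟩ :=
    sq_add_ne_zero_and_padicValRat_eq_min hx (neg_ne_zero.mpr haq) (by rwa [padicValRat.neg])
  rw [← sub_eq_add_neg] at hz hminus
  rw [padicValRat.neg] at hminus
  exact ⟨hz, hminus, by rw [two_mul_padicValRat_eq_add hxy hy, hplus]⟩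

lemma sq_sub_ne_zero_and_padicValRat_le_of_ne (hxy : y ^ 2 = x * (x ^ 2 + a)) (hy : y ≠ 0)
    (ha : a ≠ 0) (hva : ν a ≤ 4) (hne : 2 * ν x ≠ ν a) :
    x ^ 2 - a ≠ 0 ∧ ν (x ^ 2 - a) ≤ ν y := by
  obtain ⟨hz, hval, hvy⟩ := sq_sub_ne_zero_and_padicValRat_eq_min hxy hy ha hne
  have : 0 ≤ ν a := by rw [padicValRat.of_int]; positivity
  exact ⟨hz, by omega⟩

lemma sq_sub_ne_zero_and_padicValRat_lt_of_padicValRat_eq_zero (hxy : y ^ 2 = x * (x ^ 2 + a))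
    (hy : y ≠ 0) (hu : ν x = 0) (ha : a % 2 = 1) (h3 : a % 8 ≠ 3) :
    x ^ 2 - a ≠ 0 ∧ ν (x ^ 2 - a) < ν y := by
  obtain ⟨hx, hxa⟩ := ne_zero_of_sq_eq hxy hy
  have hvy := two_mul_padicValRat_eq_add hxy hy
  have h7 : a % 8 = 7 := by
    by_contra h7
    have := (sq_add_intCast_ne_zero_and_padicValRat_eq hx hu (c := a) (k := 1) (by norm_num)
      (by omega)).2
    omega
  obtain ⟨hz, hval⟩ :=
    sq_add_intCast_ne_zero_and_padicValRat_eq hx hu (c := -a) (k := 1) (by norm_num) (by omega)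
  have hplus := le_padicValRat_sq_add_intCast hx hu (c := a) (k := 3) le_rfl (by omega) hxa
  push_cast [← sub_eq_add_neg] at hz hval
  exact ⟨hz, by omega⟩

lemma sq_sub_ne_zero_and_padicValRat_le_of_padicValRat_eq_zero (hxy : y ^ 2 = x * (x ^ 2 + a))
    (hy : y ≠ 0) (hu : ν x = 0) (ha : a % 8 = 3) :
    x ^ 2 - a ≠ 0 ∧ ν (x ^ 2 - a) ≤ ν y := by
  obtain ⟨hx, -⟩ := ne_zero_of_sq_eq hxy hy
  have hvy := two_mul_padicValRat_eq_add hxy hy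
  obtain ⟨-, hplus⟩ :=
    sq_add_intCast_ne_zero_and_padicValRat_eq hx hu (c := a) (k := 2) (by norm_num) (by omega)
  obtain ⟨hz, hval⟩ :=
    sq_add_intCast_ne_zero_and_padicValRat_eq hx hu (c := -a) (k := 1) (by norm_num) (by omega)
  push_cast [← sub_eq_add_neg] at hz hval
  exact ⟨hz, by omega⟩

lemma sq_sub_ne_zero_and_padicValRat_le_of_padicValRat_eq_one (hxy : y ^ 2 = x * (x ^ 2 + a))
    (hy : y ≠ 0) (hu : ν x = 1) (ha : a % 16 = 12) :
    x ^ 2 - a ≠ 0 ∧ ν (x ^ 2 - a) ≤ ν y := by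
  obtain ⟨hx, hxa⟩ := ne_zero_of_sq_eq hxy hy
  have hvy := two_mul_padicValRat_eq_add hxy hy
  obtain ⟨b, rfl⟩ : ∃ b, a = 4 * b := ⟨a / 4, by omega⟩
  obtain ⟨t, rfl⟩ : ∃ t, x = 2 * t := ⟨x / 2, by ring⟩
  have ht0 : t ≠ 0 := right_ne_zero_of_mul hx
  have ht : ν t = 0 := by
    rw [padicValRat.mul two_ne_zero ht0, padicValRat_two] at hu
    omega
  have hplus : (2 * t) ^ 2 + ((4 * b : ℤ) : ℚ) = 4 * (t ^ 2 + b) := by push_cast; ring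
  have hminus : (2 * t) ^ 2 - ((4 * b : ℤ) : ℚ) = 4 * (t ^ 2 + ((-b : ℤ) : ℚ)) := by
    push_cast; ring
  rw [hplus] at hxa hvy
  obtain ⟨hz, hval⟩ :=
    sq_add_intCast_ne_zero_and_padicValRat_eq ht0 ht (c := -b) (k := 1) (by norm_num) (by omega)
  have hge := le_padicValRat_sq_add_intCast ht0 ht (c := b) (k := 2) (by norm_num) (by omega)
    (right_ne_zero_of_mul hxa)
  rw [padicValRat.mul four_ne_zero (right_ne_zero_of_mul hxa), padicValRat_four] at hvy
  rw [hminus, padicValRat.mul four_ne_zero hz, padicValRat_four, hval]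
  exact ⟨mul_ne_zero four_ne_zero hz, by omega⟩

lemma sq_sub_ne_zero_and_padicValRat_lt (hxy : y ^ 2 = x * (x ^ 2 + a)) (hy : y ≠ 0)
    (ha : a % 2 = 1) (h3 : a % 8 ≠ 3) : x ^ 2 - a ≠ 0 ∧ ν (x ^ 2 - a) < ν y := by
  have hva : ν a = 0 := padicValRat_intCast_eq_of_emod (k := 0) (by omega)
  by_cases hu : ν x = 0
  · exact sq_sub_ne_zero_and_padicValRat_lt_of_padicValRat_eq_zero hxy hy hu ha h3
  · obtain ⟨hz, hval, hvy⟩ := sq_sub_ne_zero_and_padicValRat_eq_min hxy hy (by omega) (by omega)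
    exact ⟨hz, by omega⟩

lemma sq_sub_ne_zero_and_padicValRat_le (hxy : y ^ 2 = x * (x ^ 2 + a)) (hy : y ≠ 0)
    (h : a % 8 = 3 ∨ a % 4 = 2 ∨ a % 16 = 8 ∨ a % 16 = 12) :
    x ^ 2 - a ≠ 0 ∧ ν (x ^ 2 - a) ≤ ν y := by
  have ha : a ≠ 0 := by omega
  rcases h with h | h | h | h
  · have hva : ν a = 0 := padicValRat_intCast_eq_of_emod (k := 0) (by omega)
    by_cases hu : ν x = 0
    · exact sq_sub_ne_zero_and_padicValRat_le_of_padicValRat_eq_zero hxy hy hu h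
    · exact sq_sub_ne_zero_and_padicValRat_le_of_ne hxy hy ha (by omega) (by omega)
  · have hva : ν a = 1 := padicValRat_intCast_eq_of_emod (k := 1) (by omega)
    exact sq_sub_ne_zero_and_padicValRat_le_of_ne hxy hy ha (by omega) (by omega)
  · have hva : ν a = 3 := padicValRat_intCast_eq_of_emod (k := 3) (by omega)
    exact sq_sub_ne_zero_and_padicValRat_le_of_ne hxy hy ha (by omega) (by omega)
  · have hva : ν a = 2 := padicValRat_intCast_eq_of_emod (k := 2) (by omega)
    by_cases hu : ν x = 1
    · exact sq_sub_ne_zero_and_padicValRat_le_of_padicValRat_eq_one hxy hy hu h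
    · exact sq_sub_ne_zero_and_padicValRat_le_of_ne hxy hy ha (by omega) (by omega)

end PointValuations

section Curve

open WeierstrassCurve.Affine

variable {F : Type*} [Field F] {a x y : F}

lemma Ecurve_negY : (Ecurve a).negY x y = -y := by
  simp [negY, Ecurve]

lemma Ecurve_equation_iff : (Ecurve a).Equation x y ↔ y ^ 2 = x * (x ^ 2 + a) := by
  rw [equation_iff]
  simp only [Ecurve]
  constructor <;> intro h <;> linear_combination h

lemma xc_two_nsmul_some [DecidableEq F] (h : (Ecurve a).Nonsingular x y) (hy : y ≠ -y) :
    xc (2 • Point.some x y h) = ((x ^ 2 - a) / (2 * y)) ^ 2 := by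
  have hy' : y ≠ (Ecurve a).negY x y := by rwa [Ecurve_negY]
  have h2y : 2 * y ≠ 0 := fun h0 => hy (by linear_combination h0)
  rw [two_nsmul, Point.add_self_of_Y_ne hy']
  change (Ecurve a).addX x x ((Ecurve a).slope x x y y) = _
  rw [slope_of_Y_ne rfl hy', Ecurve_negY, show y - -y = 2 * y by ring]
  have h2 : (2 : F) ≠ 0 := left_ne_zero_of_mul h2y
  have hy0 : y ≠ 0 := right_ne_zero_of_mul h2y
  simp only [addX, Ecurve]
  field_simp
  linear_combination (-8 * x) * Ecurve_equation_iff.mp h.1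

end Curve

theorem ord_two_B2_lower_bounds_general (a : ℤ)
    (P : (Ecurve (a : ℚ)).Point)
    (hP : ∀ n : ℕ, 0 < n → n • P ≠ 0) :
    (a % 16 ∈ ({1, 5, 7, 9, 13, 15} : Set ℤ) →
      4 ≤ padicValNat 2 (xc (2 • P)).den) ∧
    (a % 16 ∈ ({2, 3, 6, 8, 10, 11, 12, 14} : Set ℤ) →
      2 ≤ padicValNat 2 (xc (2 • P)).den) ∧
    (a % 16 = 4 → 0 ≤ padicValNat 2 (xc (2 • P)).den) := by
  rcases P with _ | ⟨x, y, h⟩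
  · exact absurd (nsmul_zero 1) (hP 1 one_pos)
  have hy : y ≠ -y := fun hy => hP 2 two_pos <| by
    rw [two_nsmul]
    exact WeierstrassCurve.Affine.Point.add_self_of_Y_eq (by rwa [Ecurve_negY])
  have hy0 : y ≠ 0 := fun h0 => hy (by simp [h0])
  have hxy := Ecurve_equation_iff.mp h.1
  rw [xc_two_nsmul_some h hy]
  refine ⟨fun hmod => ?_, fun hmod => ?_, fun _ => Nat.zero_le _⟩
  · simp only [Set.mem_insert_iff, Set.mem_singleton_iff] at hmod
    obtain ⟨hz, hlt⟩ := sq_sub_ne_zero_and_padicValRat_lt hxy hy0 (by omega) (by omega)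
    exact le_padicValNat_den (by rw [padicValRat_sq_div_two_mul hz hy0]; push_cast; omega)
  · simp only [Set.mem_insert_iff, Set.mem_singleton_iff] at hmod
    obtain ⟨hz, hle⟩ := sq_sub_ne_zero_and_padicValRat_le hxy hy0 (by omega)
    exact le_padicValNat_den (by rw [padicValRat_sq_div_two_mul hz hy0]; push_cast; omega)

/-- Lemma 6.1(b): let `a` be a nonzero fourth-power-free integer and `P ∈ E_a(ℚ)` a point
of infinite order; write `x(2P) = A₂/B₂` in lowest terms with `B₂ > 0`. Then
`ord₂(B₂) ≥ 4` if `a ≡ 1,5,7,9,13,15 (mod 16)`, `ord₂(B₂) ≥ 2` if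
`a ≡ 2,3,6,8,10,11,12,14 (mod 16)`, and `ord₂(B₂) ≥ 0` if `a ≡ 4 (mod 16)`. -/
theorem ord_two_B2_lower_bounds (a : ℤ) (ha : a ≠ 0)
    (hfree : ∀ p : ℕ, p.Prime → ¬ ((p : ℤ) ^ 4 ∣ a))
    (P : (Ecurve (a : ℚ)).Point)
    (hP : ∀ n : ℕ, 0 < n → n • P ≠ 0) :
    (a % 16 ∈ ({1, 5, 7, 9, 13, 15} : Set ℤ) →
      4 ≤ padicValNat 2 (xc (2 • P)).den) ∧
    (a % 16 ∈ ({2, 3, 6, 8, 10, 11, 12, 14} : Set ℤ) →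
      2 ≤ padicValNat 2 (xc (2 • P)).den) ∧
    (a % 16 = 4 → 0 ≤ padicValNat 2 (xc (2 • P)).den) :=
  ord_two_B2_lower_bounds_general a P hP
end

section
/- For every real number c > 1, one has c³ − 3c² + 4c − 2 > 0 and (c⁴ − 8c² + 16c − 8) / (4·(c³ − 3c² + 4c − 2)) > c/4 + 0.455. -/
/-!
Substituting `t = c - 1 > 0`, the denominator becomes `t (t² + 1)`, and after clearing it the
inequality reduces to the positivity of the cubic `59 t³ - 150 t² + 59 t + 50` on `t ≥ 0`.
-/

theorem duplication_den_eq (c : ℝ) :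
    c ^ 3 - 3 * c ^ 2 + 4 * c - 2 = (c - 1) * ((c - 1) ^ 2 + 1) := by
  ring

theorem duplication_den_pos {c : ℝ} (hc : 1 < c) : 0 < c ^ 3 - 3 * c ^ 2 + 4 * c - 2 := by
  rw [duplication_den_eq]
  exact mul_pos (sub_pos.mpr hc) (by positivity)

theorem duplication_num_sub_eq (c : ℝ) :
    c ^ 4 - 8 * c ^ 2 + 16 * c - 8 - 4 * (c ^ 3 - 3 * c ^ 2 + 4 * c - 2) * (c / 4 + 0.455) =
      (59 * (c - 1) ^ 3 - 150 * (c - 1) ^ 2 + 59 * (c - 1) + 50) / 50 := by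
  norm_num
  ring

/-- The minimum on `t ≥ 0` is about `0.009`, attained near `t = 1.468`, so the constant `0.455`
is almost sharp and the certificate has to be tuned to that point. -/
theorem cubic_pos_of_nonneg {t : ℝ} (ht : 0 ≤ t) : 0 < 59 * t ^ 3 - 150 * t ^ 2 + 59 * t + 50 := by
  nlinarith [mul_nonneg ht (sq_nonneg (t - 1.468)), sq_nonneg (t - 1.4672)]

/-- For every real `c > 1`: `c³ − 3c² + 4c − 2 > 0` and
`(c⁴ − 8c² + 16c − 8)/(4·(c³ − 3c² + 4c − 2)) > c/4 + 0.455`; i.e. if `x(P') = c·√a` on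
`E'_a`, then `x(2P') > (c/4 + 0.455)·√a`. -/
theorem duplication_x_lower_bound (c : ℝ) (hc : 1 < c) :
    0 < c ^ 3 - 3 * c ^ 2 + 4 * c - 2 ∧
      (c ^ 4 - 8 * c ^ 2 + 16 * c - 8) / (4 * (c ^ 3 - 3 * c ^ 2 + 4 * c - 2))
        > c / 4 + 0.455 := by
  have hden := duplication_den_pos hc
  refine ⟨hden, ?_⟩
  rw [gt_iff_lt, lt_div_iff₀ (by positivity)]
  have hcubic := cubic_pos_of_nonneg (sub_nonneg.mpr hc.le)
  linarith [duplication_num_sub_eq c]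
end
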